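/- Let r ≥ 1 and m ≥ 1 be integers, set n = m·(r+1)(r+2)/2, and let g(s) = 2^{−(r+2)} ∑_{i=0}^{r+2} binom(r+2, i) (1+s)^{binom(r+2,2) − i(r+2−i)} (1−s)^{i(r+2−i)}. Let k < nr/(r+2) and d < n be positive integers satisfying d · 2^{k − nr/(r+2)} · min_{0<s≤1} g(s)^{n/binom(r+2,2)} s^{−d} < 1. Then there exists a binary linear code C ⊆ F_2^n of dimension at least k and minimum distance at least d such that every coordinate of C has two disjoint recovering sets, each of size at most r. -/

import Mathlib

/-!
The code is a direct sum of `m` copies of the binary cycle code of the complete graph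
`K_{r+2}`: coordinates are edges and every vertex imposes even parity on its `r + 1` incident
edges, so an edge is recovered from the other edges at either of its two endpoints, and these
two sets are disjoint. The dual of the cycle code is the cut space, and a cut of `K_{r+2}` with
`i` vertices on one side has `i (r + 2 - i)` edges; so MacWilliams' identity identifies
`∑_{x} s^{wt x}` over the cycle code with `g(s)`, and over the direct sum with `g(s)^m`. This
bounds the number of its words of weight `< d` by `g(s)^m s^{-d}`, while the direct sum has
`2^{nr/(r+2)}` words. Under the hypothesis, Varshamov's greedy argument then extends a subcode
of minimum weight `≥ d` one dimension at a time up to dimension `k`.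
-/

open Finset Matrix Module

section RecoveringSets

variable {ι α : Type*}

def IsRecoveringSet (C : Set (ι → α)) (i : ι) (R : Finset ι) : Prop :=
  i ∉ R ∧ ∀ x ∈ C, ∀ y ∈ C, (∀ j ∈ R, x j = y j) → x i = y i

def HasTwoDisjointRecoveringSets (C : Set (ι → α)) (r : ℕ) : Prop :=
  ∀ i, ∃ R₁ R₂ : Finset ι, Disjoint R₁ R₂ ∧ #R₁ ≤ r ∧ #R₂ ≤ r ∧
    IsRecoveringSet C i R₁ ∧ IsRecoveringSet C i R₂

variable {C C' : Set (ι → α)}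

lemma IsRecoveringSet.mono {i : ι} {R : Finset ι} (h : IsRecoveringSet C i R) (hC : C' ⊆ C) :
    IsRecoveringSet C' i R :=
  ⟨h.1, fun x hx y hy => h.2 x (hC hx) y (hC hy)⟩

lemma HasTwoDisjointRecoveringSets.mono {r : ℕ} (h : HasTwoDisjointRecoveringSets C r)
    (hC : C' ⊆ C) : HasTwoDisjointRecoveringSets C' r := fun i => by
  obtain ⟨R₁, R₂, hdisj, h₁, h₂, hR₁, hR₂⟩ := h i
  exact ⟨R₁, R₂, hdisj, h₁, h₂, hR₁.mono hC, hR₂.mono hC⟩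

lemma isRecoveringSet_erase [AddCommGroup α] [DecidableEq ι] {P : Finset ι} {i : ι} (hi : i ∈ P)
    (hC : ∀ x ∈ C, ∑ j ∈ P, x j = 0) : IsRecoveringSet C i (P.erase i) := by
  refine ⟨P.notMem_erase i, fun x hx y hy hxy => ?_⟩
  have hx' := hC x hx
  have hy' := hC y hy
  rw [← add_sum_erase P _ hi, sum_congr rfl hxy] at hx'
  rw [← add_sum_erase P _ hi] at hy'
  exact add_right_cancel (hx'.trans hy'.symm)

end RecoveringSets

section BlockCode

variable {R M ι κ ι' : Type*} [Semiring R] [AddCommMonoid M] [Module R M]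

/-- The direct sum of `|ι|` copies of `C`, the `i`-th copy occupying the coordinates
`e.symm (i, ·)`. -/
def blockCode (C : Submodule R (κ → M)) (e : ι' ≃ ι × κ) : Submodule R (ι' → M) where
  carrier := {x | ∀ i, (fun j => x (e.symm (i, j))) ∈ C}
  add_mem' hx hy i := C.add_mem (hx i) (hy i)
  zero_mem' _ := C.zero_mem
  smul_mem' c _ hx i := C.smul_mem c (hx i)

variable {C : Submodule R (κ → M)} {e : ι' ≃ ι × κ}

lemma mem_blockCode {x : ι' → M} : x ∈ blockCode C e ↔ ∀ i, (fun j => x (e.symm (i, j))) ∈ C :=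
  Iff.rfl

lemma IsRecoveringSet.blockCode {p : ι'} {S : Finset κ}
    (h : IsRecoveringSet (C : Set (κ → M)) (e p).2 S) :
    IsRecoveringSet (blockCode C e : Set (ι' → M)) p
      (S.map ((Function.Embedding.sectR (e p).1 κ).trans e.symm.toEmbedding)) := by
  refine ⟨fun hp => h.1 ?_, fun x hx y hy hxy => ?_⟩
  · obtain ⟨j, hj, hjp⟩ := mem_map.1 hp
    rw [Function.Embedding.trans_apply, Equiv.toEmbedding_apply, Equiv.symm_apply_eq] at hjp
    exact congrArg Prod.snd hjp ▸ hj
  · simpa using h.2 _ (hx (e p).1) _ (hy (e p).1) fun j hj => hxy _ (mem_map_of_mem _ hj)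

lemma HasTwoDisjointRecoveringSets.blockCode {r : ℕ}
    (h : HasTwoDisjointRecoveringSets (C : Set (κ → M)) r) (e : ι' ≃ ι × κ) :
    HasTwoDisjointRecoveringSets (blockCode C e : Set (ι' → M)) r := fun p => by
  obtain ⟨R₁, R₂, hdisj, h₁, h₂, hR₁, hR₂⟩ := h (e p).2
  exact ⟨_, _, disjoint_map _ |>.2 hdisj, by simpa using h₁, by simpa using h₂,
    hR₁.blockCode, hR₂.blockCode⟩

end BlockCode

section WeightEnumerator

variable {ι α : Type*} [Fintype ι] [DecidableEq ι] [Fintype α] [Zero α] [DecidableEq α]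

open Classical in
noncomputable def weightEnumerator (C : Set (ι → α)) (s : ℝ) : ℝ :=
  ∑ x with x ∈ C, s ^ hammingNorm x

lemma weightEnumerator_one (C : Set (ι → α)) : weightEnumerator C 1 = Nat.card C := by
  classical
  simp [weightEnumerator, Nat.card_eq_fintype_card, Fintype.card_subtype]

lemma natCard_hammingNorm_lt_mul_pow_le (C : Set (ι → α)) (d : ℕ) {s : ℝ} (hs₀ : 0 ≤ s)
    (hs₁ : s ≤ 1) :
    Nat.card {x | x ∈ C ∧ hammingNorm x < d} * s ^ d ≤ weightEnumerator C s := by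
  classical
  rw [Nat.card_eq_card_toFinset, Set.toFinset_ofPred, weightEnumerator, ← filter_filter]
  calc (#{x ∈ ({x | x ∈ C} : Finset _) | hammingNorm x < d} : ℝ) * s ^ d
      = ∑ x ∈ ({x | x ∈ C} : Finset _) with hammingNorm x < d, s ^ d := by
        rw [sum_const, nsmul_eq_mul]
    _ ≤ ∑ x ∈ ({x | x ∈ C} : Finset _) with hammingNorm x < d, s ^ hammingNorm x :=
        sum_le_sum fun x hx => pow_le_pow_of_le_one hs₀ hs₁ (mem_filter.1 hx).2.le
    _ ≤ ∑ x with x ∈ C, s ^ hammingNorm x :=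
        sum_le_sum_of_subset_of_nonneg (filter_subset _ _) fun _ _ _ => by positivity

end WeightEnumerator

section BlockWeights

variable {R M ι κ ι' : Type*} [Fintype ι] [Fintype κ] [Fintype ι'] [DecidableEq M]

lemma hammingNorm_eq_sum_blocks [Zero M] (e : ι' ≃ ι × κ) (x : ι' → M) :
    hammingNorm x = ∑ i, hammingNorm fun j => x (e.symm (i, j)) := by
  simp only [hammingNorm, card_filter]
  rw [← e.symm.sum_comp, Fintype.sum_prod_type]

lemma weightEnumerator_blockCode [DecidableEq ι] [DecidableEq κ] [DecidableEq ι'] [Fintype M]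
    [AddCommMonoid M] [Semiring R] [Module R M] (C : Submodule R (κ → M)) (e : ι' ≃ ι × κ)
    (s : ℝ) :
    weightEnumerator (blockCode C e : Set (ι' → M)) s =
      weightEnumerator (C : Set (κ → M)) s ^ Fintype.card ι := by
  classical
  rw [weightEnumerator, weightEnumerator, ← card_univ, ← prod_const, prod_univ_sum]
  refine sum_nbij' (fun x i j => x (e.symm (i, j))) (fun z p => z (e p).1 (e p).2)
    (fun x hx => ?_) (fun z hz => ?_) (fun x _ => ?_) (fun z _ => ?_) (fun x _ => ?_)
  · simpa [Fintype.mem_piFinset, mem_blockCode] using hx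
  · simpa [Fintype.mem_piFinset, mem_blockCode] using hz
  · simp
  · simp
  · rw [hammingNorm_eq_sum_blocks e, prod_pow_eq_pow_sum]

end BlockWeights

section MacWilliams

noncomputable def zmodTwoChar : AddChar (ZMod 2) ℝ where
  toFun a := (-1) ^ a.val
  map_zero_eq_one' := by simp
  map_add_eq_mul' a b := by rw [ZMod.val_add, ← neg_one_pow_eq_pow_mod_two, pow_add]

lemma zmodTwoChar_one : zmodTwoChar 1 = -1 := pow_one (-1 : ℝ)

lemma one_add_mul_zmodTwoChar (c : ZMod 2) (s : ℝ) :
    1 + s * zmodTwoChar c = if c = 0 then 1 + s else 1 - s := by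
  split_ifs with hc
  · simp [hc]
  · have : c = 1 := Fin.eq_one_of_ne_zero c hc
    rw [this, zmodTwoChar_one]
    ring

lemma zmodTwoChar_sum {κ : Type*} (s : Finset κ) (f : κ → ZMod 2) :
    zmodTwoChar (∑ i ∈ s, f i) = ∏ i ∈ s, zmodTwoChar (f i) := by
  induction s using Finset.cons_induction with
  | empty => exact AddChar.map_zero_eq_one _
  | cons a s ha ih => rw [sum_cons, prod_cons, AddChar.map_add_eq_mul, ih]

lemma ZMod.sum_univ_two {M : Type*} [AddCommMonoid M] (f : ZMod 2 → M) :
    ∑ b, f b = f 0 + f 1 :=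
  Fin.sum_univ_two f

lemma pow_hammingNorm_eq_prod {E M : Type*} [Fintype E] [Zero M] [DecidableEq M] (x : E → M)
    (s : ℝ) : s ^ hammingNorm x = ∏ e, if x e = 0 then 1 else s := by
  rw [prod_ite, prod_const_one, one_mul, prod_const]
  rfl

variable {V E : Type*} [Fintype V] [DecidableEq V] [Fintype E] [DecidableEq E]

lemma sum_zmodTwoChar_dotProduct (y : V → ZMod 2) :
    ∑ t : V → ZMod 2, zmodTwoChar (t ⬝ᵥ y) = if y = 0 then 2 ^ Fintype.card V else 0 := by
  calc ∑ t : V → ZMod 2, zmodTwoChar (t ⬝ᵥ y) = ∏ v, ∑ b, zmodTwoChar (b * y v) := by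
        rw [Fintype.prod_sum]; simp only [dotProduct, zmodTwoChar_sum]
    _ = ∏ v, (1 + 1 * zmodTwoChar (y v)) := by simp [ZMod.sum_univ_two]
    _ = _ := by
        simp only [one_add_mul_zmodTwoChar]
        split_ifs with hy
        · simp [hy, one_add_one_eq_two]
        · obtain ⟨v, hv⟩ := Function.ne_iff.1 hy
          exact prod_eq_zero (mem_univ v) (by simpa using hv)

lemma sum_pow_hammingNorm_mul_zmodTwoChar (z : E → ZMod 2) (s : ℝ) :
    ∑ x : E → ZMod 2, s ^ hammingNorm x * zmodTwoChar (z ⬝ᵥ x) =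
      (1 + s) ^ (Fintype.card E - hammingNorm z) * (1 - s) ^ hammingNorm z := by
  have hcard : #{e | z e = 0} = Fintype.card E - hammingNorm z := by
    have := card_filter_add_card_filter_not (s := univ) (fun e => z e = 0)
    rw [card_univ] at this
    simp only [hammingNorm, ne_eq]
    omega
  calc ∑ x : E → ZMod 2, s ^ hammingNorm x * zmodTwoChar (z ⬝ᵥ x)
      = ∏ e, ∑ b, (if b = 0 then 1 else s) * zmodTwoChar (z e * b) := by
        rw [Fintype.prod_sum]
        simp only [pow_hammingNorm_eq_prod, dotProduct, zmodTwoChar_sum, prod_mul_distrib]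
    _ = ∏ e, (1 + s * zmodTwoChar (z e)) := by simp [ZMod.sum_univ_two]
    _ = _ := by simp only [one_add_mul_zmodTwoChar, prod_ite, prod_const, hcard]; rfl

/-- MacWilliams' identity for `ker H`, whose dual code consists of the vectors `t ᵥ* H`. -/
theorem two_pow_mul_weightEnumerator_ker (H : Matrix V E (ZMod 2)) (s : ℝ) :
    2 ^ Fintype.card V * weightEnumerator (LinearMap.ker H.mulVecLin : Set (E → ZMod 2)) s =
      ∑ t : V → ZMod 2, (1 + s) ^ (Fintype.card E - hammingNorm (t ᵥ* H)) *
        (1 - s) ^ hammingNorm (t ᵥ* H) := by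
  classical
  calc 2 ^ Fintype.card V * weightEnumerator (LinearMap.ker H.mulVecLin : Set (E → ZMod 2)) s
      = ∑ x : E → ZMod 2, s ^ hammingNorm x * if H *ᵥ x = 0 then 2 ^ Fintype.card V else 0 := by
        rw [weightEnumerator, sum_filter, mul_sum]
        refine sum_congr rfl fun x _ => ?_
        simp only [SetLike.mem_coe, LinearMap.mem_ker, mulVecLin_apply]
        split_ifs <;> ring
    _ = ∑ x : E → ZMod 2, s ^ hammingNorm x * ∑ t : V → ZMod 2, zmodTwoChar (t ⬝ᵥ H *ᵥ x) := by
        simp only [sum_zmodTwoChar_dotProduct]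
    _ = ∑ t : V → ZMod 2, ∑ x : E → ZMod 2, s ^ hammingNorm x * zmodTwoChar (t ᵥ* H ⬝ᵥ x) := by
        simp only [mul_sum, dotProduct_mulVec]
        exact sum_comm
    _ = _ := by simp only [sum_pow_hammingNorm_mul_zmodTwoChar]

end MacWilliams

namespace SimpleGraph

section IncidenceCode

variable {V : Type*} [DecidableEq V]

def edgeIncMatrix (R : Type*) [Zero R] [One R] (G : SimpleGraph V) [DecidableRel G.Adj] :
    Matrix V G.edgeSet R :=
  (G.incMatrix R).submatrix id (↑)

def incidentEdges (G : SimpleGraph V) [Fintype G.edgeSet] (v : V) : Finset G.edgeSet :=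
  {e | v ∈ (e : Sym2 V)}

def incidenceCode (R : Type*) [CommSemiring R] (G : SimpleGraph V) [DecidableRel G.Adj]
    [Fintype G.edgeSet] : Submodule R (G.edgeSet → R) :=
  LinearMap.ker (G.edgeIncMatrix R).mulVecLin

variable {R : Type*} {G : SimpleGraph V} [DecidableRel G.Adj]

lemma edgeIncMatrix_apply [Zero R] [One R] (v : V) (e : G.edgeSet) :
    G.edgeIncMatrix R v e = if v ∈ (e : Sym2 V) then 1 else 0 :=
  if_congr ⟨And.right, And.intro e.2⟩ rfl rfl

lemma vecMul_edgeIncMatrix_apply [Fintype V] [NonAssocSemiring R] (t : V → R) {u w : V}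
    (h : s(u, w) ∈ G.edgeSet) : (t ᵥ* G.edgeIncMatrix R) ⟨s(u, w), h⟩ = t u + t w := by
  simp only [vecMul, dotProduct, edgeIncMatrix_apply, mul_ite, mul_one, mul_zero]
  rw [Fintype.sum_eq_add u w (G.ne_of_adj h) fun v hv => if_neg (by simpa using hv)]
  simp

variable [Fintype G.edgeSet]

lemma card_incidentEdges [Fintype V] (v : V) : #(G.incidentEdges v) = G.degree v := by
  rw [← card_incidenceFinset_eq_degree, ← card_map (Function.Embedding.subtype _)]
  congr 1
  ext z
  simp [incidentEdges, incidenceSet, and_comm]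

lemma sum_incidentEdges_eq_zero [CommSemiring R] {x : G.edgeSet → R}
    (hx : x ∈ G.incidenceCode R) (v : V) : ∑ e ∈ G.incidentEdges v, x e = 0 := by
  have := congrFun (LinearMap.mem_ker.1 hx) v
  simpa [mulVecLin_apply, mulVec, dotProduct, edgeIncMatrix_apply, sum_filter, incidentEdges]
    using this

theorem hasTwoDisjointRecoveringSets_incidenceCode [Fintype V] [CommRing R] {r : ℕ}
    (hG : ∀ v, G.degree v ≤ r + 1) :
    HasTwoDisjointRecoveringSets (G.incidenceCode R : Set (G.edgeSet → R)) r := by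
  rintro ⟨e, he⟩
  induction e using Sym2.ind with | h u w => ?_
  have hmem {v : V} (hv : v ∈ s(u, w)) : ⟨s(u, w), he⟩ ∈ G.incidentEdges v := by
    simpa [incidentEdges] using hv
  have hcard {v : V} (hv : v ∈ s(u, w)) : #((G.incidentEdges v).erase ⟨s(u, w), he⟩) ≤ r := by
    rw [card_erase_of_mem (hmem hv), card_incidentEdges]
    exact Nat.sub_le_of_le_add (hG v)
  have hrec {v : V} (hv : v ∈ s(u, w)) : IsRecoveringSet (G.incidenceCode R : Set (G.edgeSet → R))
      ⟨s(u, w), he⟩ ((G.incidentEdges v).erase ⟨s(u, w), he⟩) :=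
    isRecoveringSet_erase (hmem hv) fun _ hx => sum_incidentEdges_eq_zero hx v
  refine ⟨_, _, Finset.disjoint_left.2 fun f hfu hfw => ?_, hcard (Sym2.mem_mk_left u w),
    hcard (Sym2.mem_mk_right u w), hrec (Sym2.mem_mk_left u w), hrec (Sym2.mem_mk_right u w)⟩
  obtain ⟨hfe, hfu⟩ := mem_erase.1 hfu
  have hfw := (mem_erase.1 hfw).2
  simp only [incidentEdges, mem_filter, mem_univ, true_and] at hfu hfw
  exact hfe (Subtype.ext (Sym2.eq_of_ne_mem (G.ne_of_adj he) hfu hfw (Sym2.mem_mk_left u w)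
    (Sym2.mem_mk_right u w)))

end IncidenceCode

section CompleteGraph

variable {V : Type*} [Fintype V] [DecidableEq V]

/-- `t ᵥ* H` is the indicator of the cut between `{v | t v ≠ 0}` and its complement. -/
lemma hammingNorm_vecMul_edgeIncMatrix_top (t : V → ZMod 2) :
    hammingNorm (t ᵥ* (⊤ : SimpleGraph V).edgeIncMatrix (ZMod 2)) =
      hammingNorm t * (Fintype.card V - hammingNorm t) := by
  set T : Finset V := {v | t v ≠ 0}
  have hT : hammingNorm t = #T := rfl
  have hmem {p : V × V} : p ∈ T ×ˢ Tᶜ ↔ t p.1 ≠ 0 ∧ t p.2 = 0 := by simp [T]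
  have hne {p : V × V} (hp : p ∈ T ×ˢ Tᶜ) : p.1 ≠ p.2 := fun h => by
    rw [hmem, h] at hp
    exact hp.1 hp.2
  rw [hT, ← card_compl, ← card_product, hammingNorm]
  symm
  refine card_bij (fun p hp => ⟨s(p.1, p.2), (mem_edgeSet _).2 ((top_adj _ _).2 (hne hp))⟩)
    (fun p hp => ?_) (fun p hp p' hp' h => ?_) (fun e he => ?_)
  · rw [hmem] at hp
    rw [mem_filter, vecMul_edgeIncMatrix_apply, hp.2, add_zero]
    exact ⟨mem_univ _, hp.1⟩
  · rw [hmem] at hp hp'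
    simp only [Subtype.mk.injEq, Sym2.eq_iff] at h
    rcases h with ⟨h₁, h₂⟩ | ⟨h₁, -⟩
    · exact Prod.ext h₁ h₂
    · exact absurd (h₁ ▸ hp'.2) hp.1
  · rcases e with ⟨z, hz⟩
    induction z using Sym2.ind with | h a b => ?_
    have hab : t a + t b ≠ 0 := by
      rwa [mem_filter, vecMul_edgeIncMatrix_apply, and_iff_right (mem_univ _)] at he
    have key : ∀ x y : ZMod 2, x + y ≠ 0 → x ≠ 0 ∧ y = 0 ∨ y ≠ 0 ∧ x = 0 := by decide
    rcases key _ _ hab with h | h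
    · exact ⟨(a, b), hmem.2 h, rfl⟩
    · exact ⟨(b, a), hmem.2 h, Subtype.ext Sym2.eq_swap⟩

lemma sum_apply_hammingNorm {M : Type*} [AddCommMonoid M] (f : ℕ → M) :
    ∑ t : V → ZMod 2, f (hammingNorm t) =
      ∑ i ∈ range (Fintype.card V + 1), (Fintype.card V).choose i • f i := by
  rw [← card_univ, ← sum_powerset_apply_card, powerset_univ]
  refine sum_nbij' (fun t => ({v | t v ≠ 0} : Finset V)) (fun T v => if v ∈ T then 1 else 0)
    (fun _ _ => mem_univ _) (fun _ _ => mem_univ _) (fun t _ => ?_) (fun T _ => ?_)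
    (fun _ _ => rfl)
  · funext v
    by_cases h : t v = 0
    · simp [h]
    · have : t v = 1 := Fin.eq_one_of_ne_zero _ h
      simp [this]
  · ext v
    by_cases h : v ∈ T <;> simp [h]

lemma card_edgeSet_top : Fintype.card (⊤ : SimpleGraph V).edgeSet = (Fintype.card V).choose 2 := by
  rw [card_edgeSet, card_edgeFinset_top_eq_card_choose_two]

theorem weightEnumerator_incidenceCode_top (s : ℝ) :
    weightEnumerator ((⊤ : SimpleGraph V).incidenceCode (ZMod 2) :
        Set ((⊤ : SimpleGraph V).edgeSet → ZMod 2)) s =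
      (2 ^ Fintype.card V)⁻¹ * ∑ i ∈ range (Fintype.card V + 1),
        ((Fintype.card V).choose i : ℝ) * (1 + s) ^ ((Fintype.card V).choose 2 -
          i * (Fintype.card V - i)) * (1 - s) ^ (i * (Fintype.card V - i)) := by
  rw [eq_inv_mul_iff_mul_eq₀ (by positivity), incidenceCode, two_pow_mul_weightEnumerator_ker,
    card_edgeSet_top]
  simp only [hammingNorm_vecMul_edgeIncMatrix_top]
  rw [sum_apply_hammingNorm fun i => (1 + s) ^ ((Fintype.card V).choose 2 -
    i * (Fintype.card V - i)) * (1 - s) ^ (i * (Fintype.card V - i))]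
  simp only [nsmul_eq_mul, mul_assoc]

theorem natCard_incidenceCode_top :
    Nat.card ((⊤ : SimpleGraph V).incidenceCode (ZMod 2)) = 2 ^ (Fintype.card V - 1).choose 2 := by
  have h := weightEnumerator_incidenceCode_top (V := V) 1
  rw [weightEnumerator_one] at h
  generalize Fintype.card V = q at h
  rcases q with _ | q
  · simpa using h
  · -- at `s = 1` only the terms `i = 0` and `i = q + 1` survive
    have hsum : ∑ i ∈ range (q + 1 + 1), ((q + 1).choose i : ℝ) * (1 + 1) ^ ((q + 1).choose 2 -
        i * (q + 1 - i)) * (1 - 1) ^ (i * (q + 1 - i)) = 2 ^ (q + 1) * 2 ^ q.choose 2 := by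
      rw [sum_range_succ, sum_eq_single_of_mem 0 (by simp) fun i hi hi0 => ?_]
      · rw [Nat.choose_succ_succ', Nat.choose_one_right]
        simp only [Nat.choose_zero_right, Nat.choose_self, zero_mul, Nat.sub_self, mul_zero,
          Nat.sub_zero, pow_zero, mul_one, one_add_one_eq_two]
        ring
      · have : i * (q + 1 - i) ≠ 0 := by
          have := mem_range.1 hi
          exact mul_ne_zero hi0 (by omega)
        simp [zero_pow this]
    rw [hsum, inv_mul_cancel_left₀ (by positivity)] at h
    exact_mod_cast h

end CompleteGraph

end SimpleGraph

section GilbertVarshamov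

open scoped Pointwise

variable {F ι : Type*} [Field F] [Finite F] [DecidableEq F] [Fintype ι] {S : Submodule F (ι → F)}
  {d : ℕ}

lemma exists_extend_of_card_lt (hd : 0 < d) {C : Submodule F (ι → F)}
    (hCS : C ≤ S) (hC : ∀ x ∈ C, x ≠ 0 → d ≤ hammingNorm x)
    (hcard : Nat.card F ^ finrank F C * Nat.card {x | x ∈ S ∧ hammingNorm x < d} < Nat.card S) :
    ∃ v ∈ S, v ∉ C ∧ ∀ x ∈ C ⊔ F ∙ v, x ≠ 0 → d ≤ hammingNorm x := by
  -- `v` is taken outside `C + L`; then no `c + a • v` with `a ≠ 0` lies in `L`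
  set L : Set (ι → F) := {x | x ∈ S ∧ hammingNorm x < d}
  have hlt : Nat.card ((C : Set (ι → F)) + L) < Nat.card S := by
    refine Set.natCard_add_le.trans_lt ?_
    rwa [SetLike.coe_sort_coe, Module.natCard_eq_pow_finrank (K := F)]
  obtain ⟨v, hvS, hv⟩ : ∃ v ∈ S, v ∉ (C : Set (ι → F)) + L := by
    by_contra! h
    exact hlt.not_ge (Nat.card_mono (Set.toFinite _) h)
  have h0L : (0 : ι → F) ∈ L := ⟨S.zero_mem, by simpa using hd⟩
  refine ⟨v, hvS, fun hvC => hv ⟨v, hvC, 0, h0L, add_zero v⟩, fun x hx hx0 => ?_⟩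
  obtain ⟨c, hc, y, hy, rfl⟩ := Submodule.mem_sup.1 hx
  obtain ⟨a, rfl⟩ := Submodule.mem_span_singleton.1 hy
  by_contra! hlight
  rcases eq_or_ne a 0 with rfl | ha
  · rw [zero_smul, add_zero] at hlight hx0
    exact hlight.not_ge (hC c hc hx0)
  · refine hv ⟨-(a⁻¹ • c), C.neg_mem (C.smul_mem _ hc), a⁻¹ • (c + a • v),
      ⟨S.smul_mem _ (S.add_mem (hCS hc) (S.smul_mem _ hvS)), ?_⟩, ?_⟩
    · rwa [hammingNorm_smul fun _ => IsSMulRegular.of_ne_zero (inv_ne_zero ha)]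
    · simp [smul_add, smul_smul, inv_mul_cancel₀ ha]

theorem exists_submodule_finrank_eq_of_card_lt (hd : 0 < d) {k : ℕ}
    (h : Nat.card F ^ k * Nat.card {x | x ∈ S ∧ hammingNorm x < d} < Nat.card S) :
    ∃ C ≤ S, finrank F C = k ∧ ∀ x ∈ C, x ≠ 0 → d ≤ hammingNorm x := by
  induction k with
  | zero =>
    exact ⟨⊥, bot_le, finrank_bot F _, fun x hx hx0 => (hx0 ((Submodule.mem_bot F).1 hx)).elim⟩
  | succ k ih =>
    have hk : Nat.card F ^ k * Nat.card {x | x ∈ S ∧ hammingNorm x < d} < Nat.card S :=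
      (Nat.mul_le_mul_right _ (Nat.pow_le_pow_right Nat.card_pos k.le_succ)).trans_lt h
    obtain ⟨C, hCS, hCk, hC⟩ := ih hk
    obtain ⟨v, hvS, hvC, hv⟩ := exists_extend_of_card_lt hd hCS hC (hCk ▸ hk)
    exact ⟨C ⊔ F ∙ v, sup_le hCS ((Submodule.span_singleton_le_iff_mem _ _).2 hvS),
      by rw [Submodule.finrank_sup_span_singleton hvC, hCk], hv⟩

end GilbertVarshamov

lemma two_pow_mul_lt_two_rpow {L W s K : ℝ} {k d : ℕ} (hs : 0 < s) (hd : 0 < d) (hL₀ : 0 ≤ L)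
    (hL : L * s ^ d ≤ W) (h : d * 2 ^ ((k : ℝ) - K) * W * s ^ (-(d : ℝ)) < 1) :
    2 ^ k * L < (2 : ℝ) ^ K := by
  rw [Real.rpow_sub two_pos, Real.rpow_natCast, Real.rpow_neg hs.le, Real.rpow_natCast] at h
  have hsd : 0 < s ^ d := pow_pos hs d
  have h' : d * 2 ^ k * W < 2 ^ K * s ^ d := by
    rw [← div_lt_one (by positivity)]
    calc _ = d * (2 ^ k / 2 ^ K) * W * (s ^ d)⁻¹ := by ring
      _ < 1 := h
  have hd₁ : (1 : ℝ) ≤ d := Nat.one_le_cast.2 hd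
  have hW : 0 ≤ W := (mul_nonneg hL₀ hsd.le).trans hL
  refine lt_of_mul_lt_mul_right ?_ hsd.le
  calc 2 ^ k * L * s ^ d ≤ 2 ^ k * W := by rw [mul_assoc]; gcongr
    _ ≤ d * 2 ^ k * W := by rw [mul_assoc]; exact le_mul_of_one_le_left (by positivity) hd₁
    _ < 2 ^ K * s ^ d := h'

lemma cast_eq_mul_choose_two {r m n : ℕ} (hn : 2 * n = m * (r + 1) * (r + 2)) :
    (n : ℝ) = m * (r + 2).choose 2 := by
  have := congrArg (Nat.cast (R := ℝ)) hn
  push_cast [Nat.cast_choose_two] at this ⊢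
  linarith

lemma cast_mul_div_eq_choose_two {r m n : ℕ} (hn : 2 * n = m * (r + 1) * (r + 2)) :
    (n : ℝ) * r / (r + 2) = ((r + 1).choose 2 * m : ℕ) := by
  rw [cast_eq_mul_choose_two hn]
  push_cast [Nat.cast_choose_two]
  field_simp
  ring

open SimpleGraph in
theorem exists_completeGraph_blockCode {r m n : ℕ} (hn : n = m * (r + 2).choose 2) :
    ∃ S : Submodule (ZMod 2) (Fin n → ZMod 2), Nat.card S = 2 ^ ((r + 1).choose 2 * m) ∧
      (∀ s : ℝ, weightEnumerator (S : Set (Fin n → ZMod 2)) s =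
        (((2 : ℝ) ^ (r + 2))⁻¹ * ∑ i ∈ range (r + 3), ((r + 2).choose i : ℝ) *
          (1 + s) ^ ((r + 2).choose 2 - i * (r + 2 - i)) * (1 - s) ^ (i * (r + 2 - i))) ^ m) ∧
      HasTwoDisjointRecoveringSets (S : Set (Fin n → ZMod 2)) r := by
  let G : SimpleGraph (Fin (r + 2)) := ⊤
  let e : Fin n ≃ Fin m × G.edgeSet := Fintype.equivOfCardEq <| by
    rw [Fintype.card_prod, card_edgeSet_top, Fintype.card_fin, Fintype.card_fin,
      Fintype.card_fin, hn]
  refine ⟨blockCode (G.incidenceCode (ZMod 2)) e, ?_, fun s => ?_, ?_⟩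
  · rw [← Nat.cast_inj (R := ℝ), ← SetLike.coe_sort_coe, ← weightEnumerator_one,
      weightEnumerator_blockCode, weightEnumerator_one, SetLike.coe_sort_coe,
      natCard_incidenceCode_top]
    simp [pow_mul]
  · rw [weightEnumerator_blockCode, weightEnumerator_incidenceCode_top]
    simp only [Fintype.card_fin]
  · refine HasTwoDisjointRecoveringSets.blockCode ?_ e
    exact hasTwoDisjointRecoveringSets_incidenceCode fun v => by
      simp [G, IsRegularOfDegree.top.degree_eq v]

theorem gv_bound_two_recovering_sets_general (r m n k d : ℕ)
    (hn : 2 * n = m * (r + 1) * (r + 2))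
    (hd : 0 < d)
    (hmin : ∃ s : ℝ, s ∈ Set.Ioc (0 : ℝ) 1 ∧
      (d : ℝ) * (2 : ℝ) ^ ((k : ℝ) - (n : ℝ) * r / ((r : ℝ) + 2)) *
        (((2 : ℝ) ^ (r + 2))⁻¹ * ∑ i ∈ Finset.range (r + 3), ((r + 2).choose i : ℝ) *
            (1 + s) ^ ((r + 2).choose 2 - i * (r + 2 - i)) *
            (1 - s) ^ (i * (r + 2 - i))) ^ ((n : ℝ) / ((r + 2).choose 2 : ℝ)) *
        s ^ (-(d : ℝ)) < 1) :
    ∃ C : Submodule (ZMod 2) (Fin n → ZMod 2),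
      k ≤ Module.finrank (ZMod 2) C ∧
      (∀ x ∈ C, ∀ y ∈ C, x ≠ y → d ≤ hammingDist x y) ∧
      (∀ i : Fin n, ∃ R₁ R₂ : Finset (Fin n),
        i ∉ R₁ ∧ i ∉ R₂ ∧ Disjoint R₁ R₂ ∧ R₁.card ≤ r ∧ R₂.card ≤ r ∧
        (∀ x ∈ C, ∀ y ∈ C, (∀ j ∈ R₁, x j = y j) → x i = y i) ∧
        (∀ x ∈ C, ∀ y ∈ C, (∀ j ∈ R₂, x j = y j) → x i = y i)) := by
  obtain ⟨s, ⟨hs₀, hs₁⟩, hs⟩ := hmin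
  obtain ⟨S, hcard, hW, hrec⟩ :=
    exists_completeGraph_blockCode (r := r) (by exact_mod_cast cast_eq_mul_choose_two hn)
  have hchoose : ((r + 2).choose 2 : ℝ) ≠ 0 := Nat.cast_ne_zero.2 (Nat.choose_pos (by omega)).ne'
  rw [cast_mul_div_eq_choose_two hn, cast_eq_mul_choose_two hn, mul_div_cancel_right₀ _ hchoose,
    Real.rpow_natCast, ← hW] at hs
  have hlt : 2 ^ k * Nat.card {x | x ∈ S ∧ hammingNorm x < d} < Nat.card S := by
    rw [hcard]
    exact_mod_cast two_pow_mul_lt_two_rpow hs₀ hd (Nat.cast_nonneg _)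
      (natCard_hammingNorm_lt_mul_pow_le (S : Set (Fin n → ZMod 2)) d hs₀.le hs₁) hs
  obtain ⟨C, hCS, hCk, hCd⟩ :=
    exists_submodule_finrank_eq_of_card_lt (F := ZMod 2) hd (by rwa [Nat.card_zmod])
  refine ⟨C, hCk.ge, fun x hx y hy hxy => ?_, fun i => ?_⟩
  · rw [hammingDist_eq_hammingNorm, neg_add_eq_sub]
    exact hCd _ (C.sub_mem hy hx) (sub_ne_zero.2 hxy.symm)
  · obtain ⟨R₁, R₂, hdisj, h₁, h₂, hR₁, hR₂⟩ := hrec.mono hCS i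
    exact ⟨R₁, R₂, hR₁.1, hR₂.1, hdisj, h₁, h₂, hR₁.2, hR₂.2⟩

/-- Finite-length Gilbert–Varshamov-type existence bound for binary LRC
codes with two disjoint recovering sets for every coordinate. -/
theorem gv_bound_two_recovering_sets (r m n k d : ℕ)
    (hr : 1 ≤ r) (hm : 1 ≤ m) (hn : 2 * n = m * (r + 1) * (r + 2))
    (hk : 0 < k) (hd : 0 < d)
    (hkn : (k : ℝ) < (n : ℝ) * r / ((r : ℝ) + 2)) (hdn : d < n)
    (hmin : ∃ s : ℝ, s ∈ Set.Ioc (0 : ℝ) 1 ∧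
      (d : ℝ) * (2 : ℝ) ^ ((k : ℝ) - (n : ℝ) * r / ((r : ℝ) + 2)) *
        (((2 : ℝ) ^ (r + 2))⁻¹ * ∑ i ∈ Finset.range (r + 3), ((r + 2).choose i : ℝ) *
            (1 + s) ^ ((r + 2).choose 2 - i * (r + 2 - i)) *
            (1 - s) ^ (i * (r + 2 - i))) ^ ((n : ℝ) / ((r + 2).choose 2 : ℝ)) *
        s ^ (-(d : ℝ)) < 1) :
    ∃ C : Submodule (ZMod 2) (Fin n → ZMod 2),
      k ≤ Module.finrank (ZMod 2) C ∧
      (∀ x ∈ C, ∀ y ∈ C, x ≠ y → d ≤ hammingDist x y) ∧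
      (∀ i : Fin n, ∃ R₁ R₂ : Finset (Fin n),
        i ∉ R₁ ∧ i ∉ R₂ ∧ Disjoint R₁ R₂ ∧ R₁.card ≤ r ∧ R₂.card ≤ r ∧
        (∀ x ∈ C, ∀ y ∈ C, (∀ j ∈ R₁, x j = y j) → x i = y i) ∧
        (∀ x ∈ C, ∀ y ∈ C, (∀ j ∈ R₂, x j = y j) → x i = y i)) :=
  gv_bound_two_recovering_sets_general r m n k d hn hd hmin
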